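/- arXiv:2501.08656 — 2 statements merged into one kernel-verified Lean document; each statement's English description precedes it below -/
import Mathlib

section
/- Let (M,d) be a finite metric space with N+1 points and let (b_n)_{n=1}^N be a basis of F(M) all of whose elements are molecules. Then there exist F ∈ Σ(M) and a tree T ∈ T(F) such that max_{x ≠ y ∈ M} d_T(x,y)/d(x,y) = d_1(b_n). In particular, M is isomorphic to a geodesic tree with Lipschitz distortion D if and only if F(M) has a basis made of molecules with ℓ1^N-distortion D. -/
open Finset

noncomputable section
open scoped Classical

namespace TCS

/-- The indicator function of a point. -/
def indic {V : Type*} [DecidableEq V] (x : V) : V → ℝ := fun z => if z = x then 1 else 0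

/-- The molecule `δ_x - δ_y`. -/
def mol {V : Type*} [DecidableEq V] (x y : V) : V → ℝ := fun z => indic x z - indic y z

/-- `d` is a metric on `V`. -/
def IsMetric {V : Type*} (d : V → V → ℝ) : Prop :=
  (∀ x y, d x y = d y x) ∧ (∀ x y, d x y = 0 ↔ x = y) ∧ ∀ x y z, d x z ≤ d x y + d y z

/-- The transportation cost norm of `μ` (an element of the free space over `(V, d)`,
i.e. a function with total sum zero), defined by duality with `Lip_0`. -/
def tcNorm {V : Type*} [Fintype V] (d : V → V → ℝ) (x0 : V) (μ : V → ℝ) : ℝ :=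
  sSup {c : ℝ | ∃ f : V → ℝ, f x0 = 0 ∧ (∀ x y, |f x - f y| ≤ d x y) ∧ c = ∑ x, μ x * f x}

/-- `(b, bstar)` is a basis of the free space over `Fin (N+1)` (with basepoint `0`),
indexed by `n ≠ 0`, together with its coordinate functionals. -/
def IsFreeBasis (N : ℕ) (b : Fin (N+1) → Fin (N+1) → ℝ)
    (bstar : Fin (N+1) → (Fin (N+1) → ℝ) → ℝ) : Prop :=
  (∀ n : Fin (N+1), n ≠ 0 → ∑ x, b n x = 0) ∧
  (∀ μ : Fin (N+1) → ℝ, (∑ x, μ x = 0) → ∀ z,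
      μ z = ∑ n ∈ univ.filter (· ≠ (0 : Fin (N+1))), bstar n μ * b n z) ∧
  (∀ n m : Fin (N+1), n ≠ 0 → m ≠ 0 → bstar n (b m) = if n = m then 1 else 0) ∧
  (∀ n (c : ℝ) (μ ν : Fin (N+1) → ℝ), bstar n (c • μ + ν) = c * bstar n μ + bstar n ν)

/-- Every canonical projection of the (ordered) basis `(b, bstar)` is a stochastic
retraction. -/
def IsStochProj (N : ℕ) (b : Fin (N+1) → Fin (N+1) → ℝ)
    (bstar : Fin (N+1) → (Fin (N+1) → ℝ) → ℝ) : Prop :=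
  ∀ n : Fin (N+1),
    ∃ S : Finset (Fin (N+1)), (0 : Fin (N+1)) ∈ S ∧
      ∃ R : Fin (N+1) → Fin (N+1) → ℝ,
        (∀ x, (∀ z, 0 ≤ R x z) ∧ (∀ z, z ∉ S → R x z = 0) ∧ ∑ z, R x z = 1) ∧
        (∀ x ∈ S, R x = indic x) ∧
        (∀ μ : Fin (N+1) → ℝ, (∑ x, μ x = 0) → ∀ z,
          (∑ i ∈ univ.filter (fun i => i ≠ (0 : Fin (N+1)) ∧ i ≤ n), bstar i μ * b i z)
            = ∑ x, μ x * R x z)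

/-- The `ℓ₁`-distortion of the basis `(b, bstar)`. -/
def d1Basis {N : ℕ} (d : Fin (N+1) → Fin (N+1) → ℝ) (b : Fin (N+1) → Fin (N+1) → ℝ)
    (bstar : Fin (N+1) → (Fin (N+1) → ℝ) → ℝ) : ℝ :=
  sSup {c : ℝ | ∃ μ : Fin (N+1) → ℝ, (∑ x, μ x = 0) ∧ tcNorm d 0 μ = 1 ∧
    c = ∑ n ∈ univ.filter (· ≠ (0 : Fin (N+1))), |bstar n μ| * tcNorm d 0 (b n)}

/-- The `ℓ₁ᴺ`-distortion of the metric space `(Fin (N+1), d)`. -/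
def d1Space {N : ℕ} (d : Fin (N+1) → Fin (N+1) → ℝ) : ℝ :=
  sInf {c : ℝ | ∃ b bstar, IsFreeBasis N b bstar ∧ c = d1Basis d b bstar}

/-- The stochastic `ℓ₁ᴺ`-distortion of the metric space `(Fin (N+1), d)`. -/
def sd1Space {N : ℕ} (d : Fin (N+1) → Fin (N+1) → ℝ) : ℝ :=
  sInf {c : ℝ | ∃ b bstar, IsFreeBasis N b bstar ∧ IsStochProj N b bstar ∧
      c = d1Basis d b bstar}

/-- The data `(λ_{n,i})` of a normalised stochastic basis. -/
def LamData (N : ℕ) (lam : Fin (N+1) → Fin (N+1) → ℝ) : Prop :=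
  (∀ n i, 0 ≤ lam n i ∧ lam n i ≤ 1) ∧
  (∀ n i : Fin (N+1), ¬ i < n → lam n i = 0) ∧
  (∀ n : Fin (N+1), n ≠ 0 → ∑ i, lam n i = 1)

/-- The normalised stochastic basis with data `F`, `(λ_{n,i})`:
`b n = δ_{F n} - ∑_{i<n} λ_{n,i} δ_{F i}`. -/
def normBasisF {N : ℕ} (F : Equiv.Perm (Fin (N+1))) (lam : Fin (N+1) → Fin (N+1) → ℝ)
    (n : Fin (N+1)) : Fin (N+1) → ℝ :=
  fun z => indic (F n) z - ∑ i, lam n i * indic (F i) z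

/-- The normalised stochastic basis after identifying `M` with `{0, …, N}` via `F`. -/
def normBasis {N : ℕ} (lam : Fin (N+1) → Fin (N+1) → ℝ) : Fin (N+1) → Fin (N+1) → ℝ :=
  normBasisF (Equiv.refl _) lam

/-- `bstar` is the family of coordinate functionals of the normalised
stochastic basis with data `F`, `(λ_{n,i})`. -/
def IsCoordF {N : ℕ} (F : Equiv.Perm (Fin (N+1))) (lam : Fin (N+1) → Fin (N+1) → ℝ)
    (bstar : Fin (N+1) → (Fin (N+1) → ℝ) → ℝ) : Prop :=
  ∀ μ : Fin (N+1) → ℝ, (∑ x, μ x = 0) → ∀ z,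
    μ z = ∑ n ∈ univ.filter (· ≠ (0 : Fin (N+1))), bstar n μ * normBasisF F lam n z

/-- The auxiliary function `α(μ)` defined by downwards recursion:
`α(μ)(n) = μ n + ∑_{m > n} α(μ)(m) λ_{m,n}`. -/
def alpha {N : ℕ} (lam : Fin (N+1) → Fin (N+1) → ℝ) (μ : Fin (N+1) → ℝ)
    (n : Fin (N+1)) : ℝ :=
  μ n + ∑ m ∈ (Finset.univ.filter (fun m : Fin (N+1) => n < m)).attach,
      alpha lam μ m.1 * lam m.1 n
termination_by (N + 1) - n.val
decreasing_by
  have hm := m.2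
  simp only [Finset.mem_filter, Finset.mem_univ, true_and] at hm
  have h1 : n.val < m.1.val := hm
  have h2 := m.1.isLt
  omega

/-- Trees on `{0,…,N}` compatible with the order: given by a parent map with
`par n < n` for `n ≠ 0`. -/
def Tr (N : ℕ) : Type :=
  {par : Fin (N+1) → Fin (N+1) // par 0 = 0 ∧ ∀ n, n ≠ 0 → par n < n}

instance (N : ℕ) : Finite (Tr N) :=
  inferInstanceAs (Finite {par : Fin (N+1) → Fin (N+1) // par 0 = 0 ∧ ∀ n, n ≠ 0 → par n < n})

noncomputable instance (N : ℕ) : Fintype (Tr N) := Fintype.ofFinite _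

/-- `a` lies on the tree path from `x` to the root `0`. -/
def Anc {N : ℕ} (T : Tr N) (x a : Fin (N+1)) : Prop :=
  Relation.ReflTransGen (fun u v => v = T.1 u ∧ u ≠ 0) x a

/-- The meeting point `m_T(x,y)`: the minimal vertex of the tree path `[x,y]_T`,
equivalently the nearest common ancestor. -/
noncomputable def meet {N : ℕ} (T : Tr N) (x y : Fin (N+1)) : Fin (N+1) :=
  WithBot.unbotD 0 ((Finset.univ.filter (fun a => Anc T x a ∧ Anc T y a)).max)

/-- `p` is a probability distribution on `Tr N`. -/
def IsProb {N : ℕ} (p : Tr N → ℝ) : Prop := (∀ T, 0 ≤ p T) ∧ ∑ T, p T = 1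

/-- Probability of an event. -/
def probOf {N : ℕ} (p : Tr N → ℝ) (P : Tr N → Prop) : ℝ :=
  ∑ T ∈ Finset.univ.filter P, p T

/-- Expectation. -/
def expval {N : ℕ} (p : Tr N → ℝ) (f : Tr N → ℝ) : ℝ := ∑ T, p T * f T

/-- The geodesic distance `d_T(x,y)` of the weighted tree `T` (edge `{n, par n}`
carrying weight `d n (par n)`). -/
noncomputable def treeDist {N : ℕ} (d : Fin (N+1) → Fin (N+1) → ℝ) (T : Tr N)
    (x y : Fin (N+1)) : ℝ :=
  ∑ s ∈ Finset.univ.filter (fun s =>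
      (Anc T x s ∨ Anc T y s) ∧ Anc T s (meet T x y) ∧ s ≠ meet T x y),
    d s (T.1 s)

/-- `s` lies on the half-open segment `[z, m)_T`. -/
def onHalfSeg {N : ℕ} (T : Tr N) (z m s : Fin (N+1)) : Prop :=
  Anc T z s ∧ Anc T s m ∧ s ≠ m

/-- `p` is `(x,y)`-independent. -/
def XYIndep {N : ℕ} (p : Tr N → ℝ) (x y : Fin (N+1)) : Prop :=
  ∀ z : Fin (N+1), (z = x ∨ z = y) → ∀ s t : Fin (N+1), t < s →
    probOf p (fun T => T.1 s = t ∧ onHalfSeg T z (meet T x y) s)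
      = probOf p (fun T => T.1 s = t) * probOf p (fun T => onHalfSeg T z (meet T x y) s)

/-- `p0` and `p` are compatible: every vertex pair has the same probability of
being an edge of the random tree. -/
def Compat {N : ℕ} (p0 p : Tr N → ℝ) : Prop :=
  ∀ s t : Fin (N+1), t < s →
    probOf p0 (fun T => T.1 s = t) = probOf p (fun T => T.1 s = t)

/-- The product probability `π_{(b_n)}` determined by the data `(λ_{n,i})`. -/
def prodProb {N : ℕ} (lam : Fin (N+1) → Fin (N+1) → ℝ) (T : Tr N) : ℝ :=
  ∏ n ∈ Finset.univ.filter (fun n : Fin (N+1) => n ≠ 0), lam n (T.1 n)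

/-- The (strictly decreasing) chain with vertex set `S` is a subgraph of `T`:
consecutive elements of `S` are linked by the parent map. -/
def chainInTree {N : ℕ} (S : Finset (Fin (N+1))) (T : Tr N) : Prop :=
  ∀ a ∈ S, (∃ c ∈ S, c < a) → T.1 a ∈ S ∧ ∀ c ∈ S, c < a → c ≤ T.1 a

end TCS

/-!
The supports `{x, y}` of the molecules `δ_x - δ_y` of a basis form a spanning tree: if no
support left a set `S ∋ 0`, the basis could not span `δ_w - δ_0` for `w ∉ S`. Adding the points
one at a time along these edges gives an enumeration `F` with which the tree is compatible.
For the tree metric `d_T`, the transportation cost norm is the weighted `ℓ₁`-norm of the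
coordinates in the basis of edge molecules, so `d₁(b_n)` is the norm of the identity
`F(M, d) → F(M, d_T)`. That norm equals the Lipschitz constant of the identity
`(M, d) → (M, d_T)`, i.e. the largest ratio `d_T / d`, because normalised molecules are extremal.
Conversely, the edge molecules of any compatible tree form a basis, which gives the equivalence.
-/

namespace TCS

section Metric

variable {V : Type*}

structure IsPseudoMetric (d : V → V → ℝ) : Prop where
  symm : ∀ x y, d x y = d y x
  self : ∀ x, d x x = 0
  triangle : ∀ x y z, d x z ≤ d x y + d y z

variable {d : V → V → ℝ}

lemma IsMetric.isPseudoMetric (hd : IsMetric d) : IsPseudoMetric d :=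
  ⟨hd.1, fun x => (hd.2.1 x x).2 rfl, hd.2.2⟩

lemma IsPseudoMetric.nonneg (hd : IsPseudoMetric d) (x y : V) : 0 ≤ d x y := by
  have := hd.triangle x y x
  rw [hd.self, hd.symm y x] at this
  linarith

lemma IsPseudoMetric.abs_sub_le (hd : IsPseudoMetric d) (x y z : V) :
    |d x z - d y z| ≤ d x y := by
  have h₁ := hd.triangle x y z
  have h₂ := hd.triangle y x z
  rw [hd.symm y x] at h₂
  exact abs_sub_le_iff.2 ⟨by linarith, by linarith⟩

lemma IsMetric.pos (hd : IsMetric d) {x y : V} (h : x ≠ y) : 0 < d x y :=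
  (hd.isPseudoMetric.nonneg x y).lt_of_ne fun he => h ((hd.2.1 x y).1 he.symm)

lemma IsMetric.comp (hd : IsMetric d) {W : Type*} {v : W → V} (hv : Function.Injective v) :
    IsMetric fun i j => d (v i) (v j) :=
  ⟨fun _ _ => hd.1 _ _, fun _ _ => (hd.2.1 _ _).trans hv.eq_iff, fun _ _ _ => hd.2.2 _ _ _⟩

end Metric

section Molecule

variable {V : Type*} [DecidableEq V]

lemma sum_mol_mul [Fintype V] (x y : V) (g : V → ℝ) : ∑ z, mol x y z * g z = g x - g y := by
  simp [mol, indic, sub_mul, Finset.sum_sub_distrib]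

lemma sum_mol [Fintype V] (x y : V) : ∑ z, mol x y z = 0 := by
  simpa using sum_mol_mul x y 1

lemma sum_mol_over [Fintype V] (A : Finset V) (x y : V) :
    ∑ z ∈ A, mol x y z = (if x ∈ A then 1 else 0) - if y ∈ A then 1 else 0 := by
  simp [mol, indic, Finset.sum_sub_distrib]

lemma mol_comp {W : Type*} [DecidableEq W] {v : W → V} (hv : Function.Injective v) (x y z : W) :
    mol (v x) (v y) (v z) = mol x y z := by
  simp [mol, indic, hv.eq_iff]

lemma eq_of_mol_eq_mol {x y x' y' : V} (hxy : x ≠ y) (h : mol x y = mol x' y') :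
    x = x' ∧ y = y' := by
  have hx := congrFun h x
  have hy := congrFun h y
  simp only [mol, indic, if_neg hxy, if_neg hxy.symm] at hx hy
  constructor <;> by_contra hne <;> split_ifs at hx hy <;> simp_all <;> linarith

def MolOn (β : V → ℝ) (x y : V) : Prop := β = mol x y ∨ β = mol y x

lemma MolOn.eq_or_eq {β : V → ℝ} {x y x' y' : V} (h : MolOn β x y) (h' : MolOn β x' y')
    (hxy : x ≠ y) : (x = x' ∧ y = y') ∨ (x = y' ∧ y = x') := by
  rcases h with h | h <;> rcases h' with h' | h'
  · exact .inl (eq_of_mol_eq_mol hxy (h.symm.trans h'))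
  · exact .inr (eq_of_mol_eq_mol hxy (h.symm.trans h'))
  · exact .inr (eq_of_mol_eq_mol hxy.symm (h.symm.trans h')).symm
  · exact .inl (eq_of_mol_eq_mol hxy.symm (h.symm.trans h')).symm

lemma MolOn.exists_sign {β : V → ℝ} {x y : V} (h : MolOn β x y) :
    ∃ s : ℝ, |s| = 1 ∧ ∀ z, β z = s * mol x y z := by
  rcases h with rfl | rfl
  · exact ⟨1, abs_one, fun z => (one_mul _).symm⟩
  · exact ⟨-1, by simp, fun z => by simp only [mol]; ring⟩

end Molecule

section TransportationCost

variable {V : Type*} [Fintype V] {d d₁ d₂ : V → V → ℝ} {x0 : V} {μ : V → ℝ}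

lemma sum_mul_le_tcNorm {f : V → ℝ} (hf0 : f x0 = 0) (hf : ∀ x y, |f x - f y| ≤ d x y) :
    ∑ x, μ x * f x ≤ tcNorm d x0 μ := by
  refine le_csSup ⟨∑ x, |μ x| * d x x0, ?_⟩ ⟨f, hf0, hf, rfl⟩
  rintro c ⟨g, hg0, hg, rfl⟩
  refine Finset.sum_le_sum fun x _ => ?_
  have := hg x x0
  rw [hg0, sub_zero] at this
  calc μ x * g x ≤ |μ x| * |g x| := by rw [← abs_mul]; exact le_abs_self _
    _ ≤ |μ x| * d x x0 := mul_le_mul_of_nonneg_left this (abs_nonneg _)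

lemma tcNorm_le {a : ℝ} (hd : ∀ x y, 0 ≤ d x y)
    (h : ∀ f : V → ℝ, f x0 = 0 → (∀ x y, |f x - f y| ≤ d x y) → ∑ x, μ x * f x ≤ a) :
    tcNorm d x0 μ ≤ a :=
  csSup_le ⟨_, 0, rfl, fun x y => by simpa using hd x y, rfl⟩ fun _ ⟨f, hf0, hf, hc⟩ =>
    hc ▸ h f hf0 hf

lemma tcNorm_nonneg (hd : ∀ x y, 0 ≤ d x y) : 0 ≤ tcNorm d x0 μ := by
  simpa using sum_mul_le_tcNorm (μ := μ) (f := 0) rfl fun x y => by simpa using hd x y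

lemma tcNorm_smul_mol [DecidableEq V] (hd : IsPseudoMetric d) (x y : V) {t : ℝ} (ht : 0 ≤ t) :
    tcNorm d x0 (fun z => t * mol x y z) = t * d x y := by
  have hsum : ∀ f : V → ℝ, ∑ z, t * mol x y z * f z = t * (f x - f y) := fun f => by
    simp_rw [mul_assoc, ← Finset.mul_sum, sum_mol_mul]
  refine le_antisymm (tcNorm_le hd.nonneg fun f _ hf => ?_) ?_
  · rw [hsum]
    exact mul_le_mul_of_nonneg_left ((le_abs_self _).trans (hf x y)) ht
  · have := sum_mul_le_tcNorm (μ := fun z => t * mol x y z) (f := fun z => d z y - d x0 y)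
      (sub_self _) fun a b => by simpa using hd.abs_sub_le a b y
    rwa [hsum, hd.self, sub_sub_sub_cancel_right, sub_zero] at this

lemma tcNorm_mol [DecidableEq V] (hd : IsPseudoMetric d) (x y : V) :
    tcNorm d x0 (mol x y) = d x y := by
  simpa using tcNorm_smul_mol (x0 := x0) hd x y zero_le_one

lemma MolOn.tcNorm_eq [DecidableEq V] {β : V → ℝ} {x y : V} (h : MolOn β x y)
    (hd : IsPseudoMetric d) : tcNorm d x0 β = d x y := by
  rcases h with rfl | rfl
  · exact tcNorm_mol hd x y
  · rw [tcNorm_mol hd, hd.symm]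

lemma tcNorm_le_mul (hd₂ : ∀ x y, 0 ≤ d₂ x y) {R : ℝ} (hR : 0 ≤ R)
    (h : ∀ x y, d₂ x y ≤ R * d₁ x y) : tcNorm d₂ x0 μ ≤ R * tcNorm d₁ x0 μ := by
  refine tcNorm_le hd₂ fun f hf0 hf => ?_
  rcases hR.eq_or_lt with rfl | hR
  · have hf' : ∀ x, f x = 0 := fun x => by
      have := (hf x x0).trans ((h x x0).trans_eq (zero_mul _))
      rwa [hf0, sub_zero, abs_nonpos_iff] at this
    simp [hf']
  · have := sum_mul_le_tcNorm (d := d₁) (μ := μ) (f := fun x => R⁻¹ * f x)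
      (by rw [hf0, mul_zero]) fun x y => by
        rw [← mul_sub, abs_mul, abs_of_pos (inv_pos.2 hR), inv_mul_le_iff₀ hR]
        exact (hf x y).trans (h x y)
    calc ∑ x, μ x * f x = R * ∑ x, μ x * (R⁻¹ * f x) := by
          rw [Finset.mul_sum]; exact Finset.sum_congr rfl fun x _ => by field_simp
      _ ≤ R * tcNorm d₁ x0 μ := mul_le_mul_of_nonneg_left this hR.le

lemma tcNorm_comp_equiv {W : Type*} [Fintype W] (d : W → W → ℝ) (F : V ≃ W) (μ : W → ℝ) :
    tcNorm (fun i j => d (F i) (F j)) x0 (fun i => μ (F i)) = tcNorm d (F x0) μ := by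
  unfold tcNorm
  congr 1
  ext c
  constructor
  · rintro ⟨f, hf0, hf, rfl⟩
    refine ⟨fun w => f (F.symm w), by simp [hf0],
      fun a b => by simpa using hf (F.symm a) (F.symm b), ?_⟩
    rw [← Equiv.sum_comp F]
    simp
  · rintro ⟨f, hf0, hf, rfl⟩
    exact ⟨fun v => f (F v), hf0, fun a b => hf (F a) (F b),
      (Equiv.sum_comp F fun w => μ w * f w).symm⟩

end TransportationCost

section Distortion

variable {V : Type*} {d₁ d₂ : V → V → ℝ}

/-- The Lipschitz constant of the identity map `(V, d₁) → (V, d₂)`. -/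
def idLip (d₁ d₂ : V → V → ℝ) : ℝ :=
  sSup {c : ℝ | ∃ x y : V, x ≠ y ∧ c = d₂ x y / d₁ x y}

/-- The norm of the linearisation `F(V, d₁) → F(V, d₂)` of the identity map. -/
def idFreeNorm [Fintype V] (d₁ d₂ : V → V → ℝ) (x0 : V) : ℝ :=
  sSup {c : ℝ | ∃ ν : V → ℝ, ∑ x, ν x = 0 ∧ tcNorm d₁ x0 ν = 1 ∧ c = tcNorm d₂ x0 ν}

lemma le_idLip_mul [Finite V] (hd₁ : IsMetric d₁) {x y : V} (hxy : x ≠ y) :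
    d₂ x y ≤ idLip d₁ d₂ * d₁ x y := by
  rw [← div_le_iff₀ (hd₁.pos hxy)]
  refine le_csSup ((Set.finite_range fun p : V × V => d₂ p.1 p.2 / d₁ p.1 p.2).subset ?_).bddAbove
    ⟨x, y, hxy, rfl⟩
  rintro _ ⟨a, b, -, rfl⟩
  exact ⟨(a, b), rfl⟩

lemma idLip_le {D : ℝ} (hd₁ : IsMetric d₁) (hD : 0 ≤ D)
    (h : ∀ x y, x ≠ y → d₂ x y ≤ D * d₁ x y) : idLip d₁ d₂ ≤ D :=
  Real.sSup_le (fun _ ⟨x, y, hxy, hc⟩ => hc ▸ (div_le_iff₀ (hd₁.pos hxy)).2 (h x y hxy)) hD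

theorem idLip_eq_idFreeNorm [Fintype V] [DecidableEq V] (hd₁ : IsMetric d₁)
    (hd₂ : IsPseudoMetric d₂) (x0 : V) : idLip d₁ d₂ = idFreeNorm d₁ d₂ x0 := by
  have hR : 0 ≤ idLip d₁ d₂ := Real.sSup_nonneg fun _ ⟨x, y, hxy, hc⟩ =>
    hc ▸ div_nonneg (hd₂.nonneg x y) (hd₁.pos hxy).le
  have hcomp : ∀ x y, d₂ x y ≤ idLip d₁ d₂ * d₁ x y := fun x y => by
    rcases eq_or_ne x y with rfl | hxy
    · rw [hd₂.self]
      exact mul_nonneg hR (hd₁.isPseudoMetric.nonneg x x)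
    · exact le_idLip_mul hd₁ hxy
  have hbound : ∀ c ∈ {c : ℝ | ∃ ν : V → ℝ, ∑ x, ν x = 0 ∧ tcNorm d₁ x0 ν = 1 ∧
      c = tcNorm d₂ x0 ν}, c ≤ idLip d₁ d₂ := fun _ ⟨ν, _, hν, hc⟩ => by
    rw [hc, ← mul_one (idLip d₁ d₂), ← hν]
    exact tcNorm_le_mul hd₂.nonneg hR hcomp
  refine le_antisymm (Real.sSup_le ?_ (Real.sSup_nonneg ?_)) (Real.sSup_le hbound hR)
  · -- each ratio is attained at the normalised molecule `(δ_x - δ_y) / d₁ x y`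
    rintro _ ⟨x, y, hxy, rfl⟩
    have ht : 0 ≤ (d₁ x y)⁻¹ := inv_nonneg.2 (hd₁.pos hxy).le
    refine le_csSup ⟨_, hbound⟩ ⟨fun z => (d₁ x y)⁻¹ * mol x y z, ?_, ?_, ?_⟩
    · rw [← Finset.mul_sum, sum_mol, mul_zero]
    · rw [tcNorm_smul_mol hd₁.isPseudoMetric x y ht, inv_mul_cancel₀ (hd₁.pos hxy).ne']
    · rw [tcNorm_smul_mol hd₂ x y ht, div_eq_inv_mul]
  · rintro _ ⟨ν, -, -, rfl⟩
    exact tcNorm_nonneg hd₂.nonneg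

end Distortion

section Tree

variable {N : ℕ} {T : Tr N} {x y a b k m : Fin (N+1)}

lemma Anc.le (h : Anc T x a) : a ≤ x := by
  induction h with
  | refl => exact le_rfl
  | tail _ hstep ih =>
    obtain ⟨rfl, hb⟩ := hstep
    exact (T.2.2 _ hb).le.trans ih

lemma Anc.trans (h₁ : Anc T x a) (h₂ : Anc T a b) : Anc T x b := Relation.ReflTransGen.trans h₁ h₂

lemma anc_self (T : Tr N) (x : Fin (N+1)) : Anc T x x := Relation.ReflTransGen.refl

lemma anc_iff (hm : m ≠ 0) : Anc T m k ↔ k = m ∨ Anc T (T.1 m) k := by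
  refine Relation.ReflTransGen.cases_head_iff.trans ?_
  constructor
  · rintro (rfl | ⟨c, ⟨rfl, -⟩, hc⟩)
    exacts [.inl rfl, .inr hc]
  · rintro (rfl | hk)
    exacts [.inl rfl, .inr ⟨_, ⟨rfl, hm⟩, hk⟩]

lemma anc_zero (T : Tr N) (x : Fin (N+1)) : Anc T x 0 := by
  induction x using WellFoundedLT.induction with
  | ind x ih =>
    rcases eq_or_ne x 0 with rfl | hx
    · exact anc_self T 0
    · exact (anc_iff hx).2 (.inr (ih _ (T.2.2 x hx)))

lemma Anc.eq_zero (h : Anc T 0 a) : a = 0 := le_antisymm h.le (Fin.zero_le a)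

lemma anc_total : ∀ {x : Fin (N+1)}, Anc T x a → Anc T x b → Anc T a b ∨ Anc T b a := by
  intro x
  induction x using WellFoundedLT.induction with
  | ind x ih =>
    intro ha hb
    rcases eq_or_ne x 0 with rfl | hx
    · rw [ha.eq_zero, hb.eq_zero]
      exact .inl (anc_self T 0)
    rcases (anc_iff hx).1 ha with rfl | ha'
    · exact .inl hb
    rcases (anc_iff hx).1 hb with rfl | hb'
    · exact .inr ha
    exact ih _ (T.2.2 x hx) ha' hb'

lemma meet_comm (T : Tr N) (x y : Fin (N+1)) : meet T x y = meet T y x := by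
  simp only [meet, and_comm]

lemma meet_spec (T : Tr N) (x y : Fin (N+1)) :
    (Anc T x (meet T x y) ∧ Anc T y (meet T x y)) ∧
      ∀ a, Anc T x a → Anc T y a → a ≤ meet T x y := by
  have hne : (univ.filter fun a => Anc T x a ∧ Anc T y a).Nonempty :=
    ⟨0, by simp [anc_zero]⟩
  have hmax : meet T x y = (univ.filter fun a => Anc T x a ∧ Anc T y a).max' hne := by
    rw [meet, ← Finset.coe_max' hne]
    rfl
  rw [hmax]
  exact ⟨(Finset.mem_filter.1 (Finset.max'_mem _ hne)).2,
    fun a h₁ h₂ => Finset.le_max' _ a (by simp [h₁, h₂])⟩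

lemma anc_meet_left (T : Tr N) (x y : Fin (N+1)) : Anc T x (meet T x y) := (meet_spec T x y).1.1

lemma anc_meet_right (T : Tr N) (x y : Fin (N+1)) : Anc T y (meet T x y) := (meet_spec T x y).1.2

lemma le_meet (h₁ : Anc T x a) (h₂ : Anc T y a) : a ≤ meet T x y := (meet_spec T x y).2 a h₁ h₂

lemma anc_meet_of_not_anc (hx : Anc T x k) (hy : ¬ Anc T y k) :
    Anc T k (meet T x y) ∧ k ≠ meet T x y :=
  ⟨(anc_total hx (anc_meet_left T x y)).resolve_right fun h => hy ((anc_meet_right T x y).trans h),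
    fun h => hy (h ▸ anc_meet_right T x y)⟩

/-- The parent edges of the vertices separating `x` from `y` form the tree path `[x, y]`. -/
lemma separates_iff :
    (k ≠ 0 ∧ ¬(Anc T x k ↔ Anc T y k)) ↔
      (Anc T x k ∨ Anc T y k) ∧ Anc T k (meet T x y) ∧ k ≠ meet T x y := by
  constructor
  · rintro ⟨-, hk⟩
    by_cases hx : Anc T x k
    · exact ⟨.inl hx, anc_meet_of_not_anc hx fun hy => hk (iff_of_true hx hy)⟩
    · have hy : Anc T y k := by_contra fun hy => hk (iff_of_false hx hy)
      rw [meet_comm]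
      exact ⟨.inr hy, anc_meet_of_not_anc hy hx⟩
  · rintro ⟨hxy, hkm, hne⟩
    refine ⟨fun h0 => hne (h0 ▸ (h0 ▸ hkm).eq_zero.symm), fun hiff => hne ?_⟩
    have hboth : Anc T x k ∧ Anc T y k := by tauto
    exact le_antisymm (le_meet hboth.1 hboth.2) hkm.le

def ancInd (T : Tr N) (x k : Fin (N+1)) : ℝ := if Anc T x k then 1 else 0

lemma ancInd_zero (hk : k ≠ 0) : ancInd T 0 k = 0 :=
  if_neg fun h => hk h.eq_zero

lemma ancInd_sub_ancInd_parent (hm : m ≠ 0) (k : Fin (N+1)) :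
    ancInd T m k - ancInd T (T.1 m) k = if k = m then 1 else 0 := by
  have hpar : ¬ Anc T (T.1 m) m := fun h => (T.2.2 m hm).not_ge h.le
  by_cases hkm : k = m
  · subst hkm
    simp [ancInd, anc_self, hpar]
  · simp [ancInd, anc_iff hm, hkm]

lemma sub_eq_sum_ancInd (f : Fin (N+1) → ℝ) (x : Fin (N+1)) :
    f x - f 0 = ∑ k ∈ univ.filter (· ≠ 0), ancInd T x k * (f k - f (T.1 k)) := by
  induction x using WellFoundedLT.induction with
  | ind x ih =>
    rcases eq_or_ne x 0 with rfl | hx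
    · rw [sub_self, eq_comm]
      exact Finset.sum_eq_zero fun k hk => by rw [ancInd_zero (mem_filter.1 hk).2, zero_mul]
    · have hind : ∀ k, ancInd T x k = ancInd T (T.1 x) k + if k = x then 1 else 0 := fun k => by
        rw [← ancInd_sub_ancInd_parent hx k]; ring
      simp_rw [hind, add_mul, sum_add_distrib, ← ih _ (T.2.2 x hx), ite_mul, one_mul, zero_mul,
        sum_ite_eq', mem_filter, mem_univ, true_and, if_pos hx]
      ring

lemma sum_ancInd_sub_parent (g : Fin (N+1) → ℝ) (hm : m ≠ 0) :
    ∑ k ∈ univ.filter (· ≠ 0), ancInd T m k * g k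
      - ∑ k ∈ univ.filter (· ≠ 0), ancInd T (T.1 m) k * g k = g m := by
  simp_rw [← sum_sub_distrib, ← sub_mul, ancInd_sub_ancInd_parent hm, ite_mul, one_mul, zero_mul,
    sum_ite_eq', mem_filter, mem_univ, true_and, if_pos hm]

end Tree

section TreeMetric

variable {N : ℕ} {T : Tr N} {d' : Fin (N+1) → Fin (N+1) → ℝ}

lemma treeDist_eq_sum (d' : Fin (N+1) → Fin (N+1) → ℝ) (T : Tr N) (x y : Fin (N+1)) :
    treeDist d' T x y
      = ∑ k ∈ univ.filter (· ≠ 0), |ancInd T x k - ancInd T y k| * d' k (T.1 k) := by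
  have habs : ∀ k, |ancInd T x k - ancInd T y k| = if ¬(Anc T x k ↔ Anc T y k) then 1 else 0 :=
    fun k => by by_cases hx : Anc T x k <;> by_cases hy : Anc T y k <;> simp [ancInd, hx, hy]
  simp_rw [habs, ite_mul, one_mul, zero_mul, ← sum_filter, filter_filter, separates_iff]
  rfl

lemma isPseudoMetric_treeDist (hw : ∀ a b, 0 ≤ d' a b) : IsPseudoMetric (treeDist d' T) where
  symm x y := by simp_rw [treeDist_eq_sum, abs_sub_comm]
  self x := by simp [treeDist_eq_sum]
  triangle x y z := by
    simp_rw [treeDist_eq_sum, ← sum_add_distrib, ← add_mul]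
    exact sum_le_sum fun k _ => mul_le_mul_of_nonneg_right (abs_sub_le _ _ _) (hw _ _)

lemma treeDist_parent {k : Fin (N+1)} (hk : k ≠ 0) : treeDist d' T k (T.1 k) = d' k (T.1 k) := by
  simp_rw [treeDist_eq_sum, ancInd_sub_ancInd_parent hk, apply_ite abs, abs_one, abs_zero, ite_mul,
    one_mul, zero_mul, sum_ite_eq', mem_filter, mem_univ, true_and, if_pos hk]

lemma abs_sub_le_treeDist {f : Fin (N+1) → ℝ}
    (hf : ∀ k, k ≠ 0 → |f k - f (T.1 k)| ≤ d' k (T.1 k)) (x y : Fin (N+1)) :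
    |f x - f y| ≤ treeDist d' T x y := by
  have hdiff : f x - f y
      = ∑ k ∈ univ.filter (· ≠ 0), (ancInd T x k - ancInd T y k) * (f k - f (T.1 k)) := by
    rw [← sub_sub_sub_cancel_right (f x) (f y) (f 0), sub_eq_sum_ancInd (T := T),
      sub_eq_sum_ancInd (T := T), ← sum_sub_distrib]
    simp_rw [sub_mul]
  rw [hdiff, treeDist_eq_sum]
  refine (abs_sum_le_sum_abs _ _).trans (sum_le_sum fun k hk => ?_)
  rw [abs_mul]
  exact mul_le_mul_of_nonneg_left (hf k (mem_filter.1 hk).2) (abs_nonneg _)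

lemma le_treeDist (hd : IsPseudoMetric d') (T : Tr N) (x y : Fin (N+1)) :
    d' x y ≤ treeDist d' T x y := by
  have := abs_sub_le_treeDist (T := T) (f := fun z => d' z y)
    (fun k _ => hd.abs_sub_le k (T.1 k) y) x y
  rw [hd.self, sub_zero] at this
  exact (le_abs_self _).trans this

lemma sum_mul_eq_sum_edges {c ν : Fin (N+1) → ℝ}
    (hν : ∀ z, ν z = ∑ k ∈ univ.filter (· ≠ 0), c k * mol k (T.1 k) z) (f : Fin (N+1) → ℝ) :
    ∑ z, ν z * f z = ∑ k ∈ univ.filter (· ≠ 0), c k * (f k - f (T.1 k)) := by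
  simp_rw [hν, sum_mul, mul_assoc]
  rw [sum_comm]
  simp_rw [← mul_sum, sum_mol_mul]

theorem tcNorm_treeDist (hw : ∀ a b, 0 ≤ d' a b) {c ν : Fin (N+1) → ℝ}
    (hν : ∀ z, ν z = ∑ k ∈ univ.filter (· ≠ 0), c k * mol k (T.1 k) z) :
    tcNorm (treeDist d' T) 0 ν = ∑ k ∈ univ.filter (· ≠ 0), |c k| * d' k (T.1 k) := by
  refine le_antisymm (tcNorm_le (isPseudoMetric_treeDist hw).nonneg fun f _ hf => ?_) ?_
  · rw [sum_mul_eq_sum_edges hν]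
    refine sum_le_sum fun k hk => ?_
    calc c k * (f k - f (T.1 k)) ≤ |c k| * |f k - f (T.1 k)| := by
          rw [← abs_mul]; exact le_abs_self _
      _ ≤ |c k| * d' k (T.1 k) := mul_le_mul_of_nonneg_left
          ((hf k (T.1 k)).trans_eq (treeDist_parent (mem_filter.1 hk).2)) (abs_nonneg _)
  · -- the extremal function runs along each edge in the direction of the sign of its coordinate
    set g : Fin (N+1) → ℝ := fun k => if 0 ≤ c k then d' k (T.1 k) else -d' k (T.1 k)
    set f : Fin (N+1) → ℝ := fun x => ∑ k ∈ univ.filter (· ≠ 0), ancInd T x k * g k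
    have hstep : ∀ k, k ≠ 0 → f k - f (T.1 k) = g k := fun k hk => sum_ancInd_sub_parent g hk
    have hf0 : f 0 = 0 :=
      sum_eq_zero fun k hk => by rw [ancInd_zero (mem_filter.1 hk).2, zero_mul]
    have hlip := abs_sub_le_treeDist (T := T) (d' := d') (f := f) fun k hk => by
      rw [hstep k hk]
      by_cases hc : 0 ≤ c k <;> simp [g, hc, abs_of_nonneg (hw k (T.1 k))]
    have := sum_mul_le_tcNorm (μ := ν) hf0 hlip
    rw [sum_mul_eq_sum_edges hν] at this
    refine le_of_eq_of_le (sum_congr rfl fun k hk => ?_) this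
    rw [hstep k (mem_filter.1 hk).2]
    by_cases hc : 0 ≤ c k
    · simp [g, hc, abs_of_nonneg hc]
    · simp [g, hc, abs_of_neg (not_le.1 hc)]

lemma eq_sum_ancInd_mul_mol (T : Tr N) {ν : Fin (N+1) → ℝ} (hν : ∑ x, ν x = 0) (w : Fin (N+1)) :
    ν w = ∑ n ∈ univ.filter (· ≠ 0), (∑ k, ancInd T k n * ν k) * mol n (T.1 n) w := by
  have hpath : ∀ k, ∑ n ∈ univ.filter (· ≠ 0), ancInd T k n * mol n (T.1 n) w
      = indic k w - indic 0 w := fun k => (sub_eq_sum_ancInd (fun j => indic j w) k).symm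
  calc ν w = ∑ k, ν k * (indic k w - indic 0 w) := by
        simp [mul_sub, sum_sub_distrib, indic, hν]
    _ = ∑ k, ∑ n ∈ univ.filter (· ≠ 0), ancInd T k n * ν k * mol n (T.1 n) w := by
        simp_rw [← hpath, mul_sum]
        exact sum_congr rfl fun _ _ => sum_congr rfl fun _ _ => by ring
    _ = _ := by
        rw [sum_comm]
        simp_rw [sum_mul]

theorem isFreeBasis_tree (F : Equiv.Perm (Fin (N+1))) (T : Tr N) :
    IsFreeBasis N (fun n => mol (F n) (F (T.1 n))) (fun n μ => ∑ k, ancInd T k n * μ (F k)) := by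
  refine ⟨fun n _ => sum_mol _ _, fun μ hμ z => ?_, fun n m _ hm => ?_, fun n c μ ν => ?_⟩
  · have hμF : ∑ k, μ (F k) = 0 := (Equiv.sum_comp F μ).trans hμ
    conv_lhs => rw [← F.apply_symm_apply z]
    rw [eq_sum_ancInd_mul_mol T (ν := fun k => μ (F k)) hμF]
    simp_rw [← mol_comp F.injective _ _ (F.symm z), F.apply_symm_apply]
  · simp_rw [mol_comp F.injective, mul_comm (ancInd T _ n), sum_mol_mul]
    exact ancInd_sub_ancInd_parent hm n
  · simp only [Pi.add_apply, Pi.smul_apply, smul_eq_mul, mul_add, sum_add_distrib, mul_sum]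
    exact congrArg (· + _) (sum_congr rfl fun _ _ => by ring)

end TreeMetric

section MoleculeBasis

variable {N : ℕ} {b : Fin (N+1) → Fin (N+1) → ℝ} {bstar : Fin (N+1) → (Fin (N+1) → ℝ) → ℝ}

-- Otherwise every basis molecule, hence also `δ_w - δ_0` for `w ∉ S`, has no mass on `Sᶜ`.
lemma exists_molOn_across (hbasis : IsFreeBasis N b bstar)
    (hmol : ∀ n : Fin (N+1), n ≠ 0 → ∃ x y : Fin (N+1), x ≠ y ∧ b n = mol x y)
    {S : Finset (Fin (N+1))} (h0 : 0 ∈ S) (hS : S ≠ univ) :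
    ∃ n, n ≠ 0 ∧ ∃ u ∈ S, ∃ w ∉ S, MolOn (b n) w u := by
  by_contra hcon
  push Not at hcon
  obtain ⟨w, hw⟩ : ∃ w, w ∉ S := by simpa [eq_univ_iff_forall] using hS
  have hzero : ∀ n ∈ univ.filter (· ≠ 0), ∑ z ∈ Sᶜ, b n z = 0 := by
    intro n hn
    obtain ⟨x, y, -, hb⟩ := hmol n (mem_filter.1 hn).2
    have hxy : x ∈ S ↔ y ∈ S := by
      by_contra h
      by_cases hx : x ∈ S
      · exact hcon n (mem_filter.1 hn).2 x hx y (by tauto) (.inr hb)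
      · exact hcon n (mem_filter.1 hn).2 y (by tauto) x hx (.inl hb)
    simp [hb, sum_mol_over, hxy]
  have h1 : ∑ z ∈ Sᶜ, mol w 0 z = 1 := by simp [sum_mol_over, hw, h0]
  have h2 : ∑ z ∈ Sᶜ, mol w 0 z = 0 := by
    rw [sum_congr rfl fun z _ => hbasis.2.1 _ (sum_mol w 0) z, sum_comm]
    exact sum_eq_zero fun n hn => by rw [← mul_sum, hzero n hn, mul_zero]
  exact one_ne_zero (h1.symm.trans h2)

lemma exists_molOn_prefix (hbasis : IsFreeBasis N b bstar)
    (hmol : ∀ n : Fin (N+1), n ≠ 0 → ∃ x y : Fin (N+1), x ≠ y ∧ b n = mol x y)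
    (i : Fin (N+1)) :
    ∃ v par σ : Fin (N+1) → Fin (N+1), v 0 = 0 ∧ par 0 = 0 ∧ σ 0 = 0 ∧ Set.InjOn v (Set.Iic i) ∧
      ∀ j, j ≠ 0 → j ≤ i → par j < j ∧ σ j ≠ 0 ∧ MolOn (b (σ j)) (v j) (v (par j)) := by
  induction i using Fin.induction with
  | zero =>
    refine ⟨0, 0, 0, rfl, rfl, rfl, fun a ha a' ha' _ => ?_, fun j hj hj0 => ?_⟩
    · rw [Set.mem_Iic, Fin.le_zero_iff] at ha ha'
      rw [ha, ha']
    · exact absurd (Fin.le_zero_iff.1 hj0) hj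
  | succ i ih =>
    obtain ⟨v, par, σ, hv0, hp0, hσ0, hinj, hedge⟩ := ih
    have hne : ∀ {a}, a ≤ i.castSucc → a ≠ i.succ := fun ha => (Fin.le_castSucc_iff.1 ha).ne
    have hS : (Iic i.castSucc).image v ≠ univ := fun h => by
      have := card_image_le (s := Iic i.castSucc) (f := v)
      rw [h, card_univ, Fintype.card_fin, Fin.card_Iic, Fin.val_castSucc] at this
      omega
    obtain ⟨n, hn, _, hu, w, hw, hnw⟩ :=
      exists_molOn_across hbasis hmol (mem_image.2 ⟨0, by simp, hv0⟩) hS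
    obtain ⟨j, hj, rfl⟩ := mem_image.1 hu
    have hj : j ≤ i.castSucc := mem_Iic.1 hj
    have hIic : Set.Iic i.succ = insert i.succ (Set.Iic i.castSucc) := by
      ext a
      simp only [Set.mem_Iic, Set.mem_insert_iff, Fin.le_castSucc_iff]
      exact le_iff_eq_or_lt
    have h0 : (0 : Fin (N+1)) ≠ i.succ := (Fin.succ_ne_zero i).symm
    refine ⟨Function.update v i.succ w, Function.update par i.succ j, Function.update σ i.succ n,
      by rw [Function.update_of_ne h0, hv0], by rw [Function.update_of_ne h0, hp0],
      by rw [Function.update_of_ne h0, hσ0], ?_, fun k hk0 hk => ?_⟩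
    · rw [hIic, Set.injOn_insert (a := i.succ) fun h => hne h rfl]
      refine ⟨hinj.congr fun a ha => (Function.update_of_ne (hne ha) _ _).symm, ?_⟩
      rintro ⟨a, ha, hva⟩
      rw [Function.update_self, Function.update_of_ne (hne ha)] at hva
      exact hw (mem_image.2 ⟨a, mem_Iic.2 ha, hva⟩)
    rcases hk.eq_or_lt with rfl | hk
    · simp only [Function.update_self, Function.update_of_ne (hne hj)]
      exact ⟨Fin.le_castSucc_iff.1 hj, hn, hnw⟩
    · have hk := Fin.le_castSucc_iff.2 hk
      obtain ⟨hpar, hσ, hmolk⟩ := hedge k hk0 hk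
      simp only [Function.update_of_ne (hne hk), Function.update_of_ne (hne (hpar.le.trans hk))]
      exact ⟨hpar, hσ, hmolk⟩

theorem exists_tree_of_molecule_basis (hbasis : IsFreeBasis N b bstar)
    (hmol : ∀ n : Fin (N+1), n ≠ 0 → ∃ x y : Fin (N+1), x ≠ y ∧ b n = mol x y) :
    ∃ F : Equiv.Perm (Fin (N+1)), F 0 = 0 ∧ ∃ T : Tr N, ∃ σ : Equiv.Perm (Fin (N+1)), σ 0 = 0 ∧
      ∀ i, i ≠ 0 → MolOn (b (σ i)) (F i) (F (T.1 i)) := by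
  obtain ⟨v, par, σ, hv0, hp0, hσ0, hinj, hedge⟩ := exists_molOn_prefix hbasis hmol (Fin.last N)
  replace hedge := fun i hi => hedge i hi (Fin.le_last i)
  have hv : Function.Injective v := fun a a' h => hinj (Fin.le_last a) (Fin.le_last a') h
  have hσ : Function.Injective σ := by
    intro i j h
    rcases eq_or_ne i 0 with rfl | hi <;> rcases eq_or_ne j 0 with rfl | hj
    · rfl
    · exact absurd (h.symm.trans hσ0) (hedge j hj).2.1
    · exact absurd (h.trans hσ0) (hedge i hi).2.1
    have hi' := (hedge i hi).2.2
    rw [h] at hi'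
    rcases hi'.eq_or_eq (hedge j hj).2.2 (hv.ne (hedge i hi).1.ne') with ⟨hij, -⟩ | ⟨hij, hji⟩
    · exact hv hij
    · -- otherwise `i = par j < j = par i < i`
      have := (hedge i hi).1.trans_eq (hv hij) |>.trans (hedge j hj).1
      rw [← hv hji] at this
      exact absurd this (lt_irrefl _)
  exact ⟨Equiv.ofBijective v hv.bijective_of_finite, hv0, ⟨par, hp0, fun i hi => (hedge i hi).1⟩,
    Equiv.ofBijective σ hσ.bijective_of_finite, hσ0, fun i hi => (hedge i hi).2.2⟩

lemma sum_abs_coord_mul_tcNorm {d : Fin (N+1) → Fin (N+1) → ℝ} (hd : IsMetric d)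
    (hbasis : IsFreeBasis N b bstar) {F σ : Equiv.Perm (Fin (N+1))} (hσ0 : σ 0 = 0) {T : Tr N}
    (hedge : ∀ i, i ≠ 0 → MolOn (b (σ i)) (F i) (F (T.1 i)))
    {μ : Fin (N+1) → ℝ} (hμ : ∑ x, μ x = 0) :
    ∑ n ∈ univ.filter (· ≠ 0), |bstar n μ| * tcNorm d 0 (b n)
      = tcNorm (treeDist (fun i j => d (F i) (F j)) T) 0 (fun k => μ (F k)) := by
  have hreindex : ∀ g : Fin (N+1) → ℝ,
      ∑ n ∈ univ.filter (· ≠ 0), g n = ∑ k ∈ univ.filter (· ≠ 0), g (σ k) := fun g =>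
    (sum_bijective σ σ.bijective (fun k => by simp [σ.injective.ne_iff' hσ0]) fun _ _ => rfl).symm
  choose! s hs using fun i (hi : i ≠ 0) => (hedge i hi).exists_sign
  have hexp : ∀ z, μ (F z) = ∑ k ∈ univ.filter (· ≠ 0), bstar (σ k) μ * s k * mol k (T.1 k) z := by
    intro z
    rw [hbasis.2.1 μ hμ (F z), hreindex]
    refine sum_congr rfl fun k hk => ?_
    rw [(hs k (mem_filter.1 hk).2).2, mol_comp F.injective]
    ring
  rw [tcNorm_treeDist (hd.comp F.injective).isPseudoMetric.nonneg hexp, hreindex]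
  refine sum_congr rfl fun k hk => ?_
  rw [abs_mul, (hs k (mem_filter.1 hk).2).1, mul_one,
    (hedge k (mem_filter.1 hk).2).tcNorm_eq hd.isPseudoMetric]

theorem d1Basis_eq_idLip {d : Fin (N+1) → Fin (N+1) → ℝ} (hd : IsMetric d)
    (hbasis : IsFreeBasis N b bstar) {F σ : Equiv.Perm (Fin (N+1))} (hF0 : F 0 = 0)
    (hσ0 : σ 0 = 0) {T : Tr N} (hedge : ∀ i, i ≠ 0 → MolOn (b (σ i)) (F i) (F (T.1 i))) :
    d1Basis d b bstar
      = idLip (fun i j => d (F i) (F j)) (treeDist (fun i j => d (F i) (F j)) T) := by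
  have hdF := hd.comp F.injective
  rw [idLip_eq_idFreeNorm hdF (isPseudoMetric_treeDist hdF.isPseudoMetric.nonneg) 0, d1Basis,
    idFreeNorm]
  have hnorm : ∀ μ, tcNorm (fun i j => d (F i) (F j)) 0 (fun k => μ (F k)) = tcNorm d 0 μ :=
    fun μ => by rw [tcNorm_comp_equiv, hF0]
  congr 1
  ext c
  constructor
  · rintro ⟨μ, hμ, hμ1, rfl⟩
    exact ⟨fun k => μ (F k), (Equiv.sum_comp F μ).trans hμ, (hnorm μ).trans hμ1,
      sum_abs_coord_mul_tcNorm hd hbasis hσ0 hedge hμ⟩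
  · rintro ⟨ν, hν, hν1, rfl⟩
    have hνF : (fun k => ν (F.symm (F k))) = ν := funext fun k => by simp
    have hμ : ∑ x, ν (F.symm x) = 0 := (Equiv.sum_comp F.symm ν).trans hν
    refine ⟨fun x => ν (F.symm x), hμ, ?_, ?_⟩
    · rw [← hnorm, hνF, hν1]
    · rw [sum_abs_coord_mul_tcNorm hd hbasis hσ0 hedge hμ, hνF]

end MoleculeBasis

theorem statement1 (N : ℕ) (d : Fin (N+1) → Fin (N+1) → ℝ) (hd : IsMetric d)
    (b : Fin (N+1) → Fin (N+1) → ℝ) (bstar : Fin (N+1) → (Fin (N+1) → ℝ) → ℝ)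
    (hbasis : IsFreeBasis N b bstar)
    (hmol : ∀ n : Fin (N+1), n ≠ 0 → ∃ x y : Fin (N+1), x ≠ y ∧ b n = mol x y) :
    (∃ F : Equiv.Perm (Fin (N+1)), F 0 = 0 ∧ ∃ T : Tr N,
      sSup {c : ℝ | ∃ x y : Fin (N+1), x ≠ y ∧
          c = treeDist (fun i j => d (F i) (F j)) T x y / d (F x) (F y)}
        = d1Basis d b bstar) ∧
    (∀ D : ℝ, 1 ≤ D →
      ((∃ F : Equiv.Perm (Fin (N+1)), F 0 = 0 ∧ ∃ T : Tr N,
          ∀ x y : Fin (N+1), x ≠ y →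
            d (F x) (F y) ≤ treeDist (fun i j => d (F i) (F j)) T x y ∧
            treeDist (fun i j => d (F i) (F j)) T x y ≤ D * d (F x) (F y)) ↔
        ∃ b' bstar', IsFreeBasis N b' bstar' ∧
          (∀ n : Fin (N+1), n ≠ 0 → ∃ x y : Fin (N+1), x ≠ y ∧ b' n = mol x y) ∧
          d1Basis d b' bstar' ≤ D)) := by
  refine ⟨?_, fun D hD => ⟨?_, ?_⟩⟩
  · obtain ⟨F, hF0, T, σ, hσ0, hedge⟩ := exists_tree_of_molecule_basis hbasis hmol
    exact ⟨F, hF0, T, (d1Basis_eq_idLip hd hbasis hF0 hσ0 hedge).symm⟩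
  · rintro ⟨F, hF0, T, hT⟩
    refine ⟨_, _, isFreeBasis_tree F T,
      fun n hn => ⟨_, _, F.injective.ne (T.2.2 n hn).ne', rfl⟩, ?_⟩
    rw [d1Basis_eq_idLip hd (isFreeBasis_tree F T) hF0 (σ := Equiv.refl _) rfl fun _ _ => .inl rfl]
    exact idLip_le (hd.comp F.injective) (zero_le_one.trans hD) fun x y hxy => (hT x y hxy).2
  · rintro ⟨b', bstar', hb', hmol', hD'⟩
    obtain ⟨F, hF0, T, σ, hσ0, hedge⟩ := exists_tree_of_molecule_basis hb' hmol'
    have hdF := hd.comp F.injective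
    refine ⟨F, hF0, T, fun x y hxy => ⟨le_treeDist hdF.isPseudoMetric T x y, ?_⟩⟩
    rw [d1Basis_eq_idLip hd hb' hF0 hσ0 hedge] at hD'
    exact (le_idLip_mul hdF hxy).trans
      (mul_le_mul_of_nonneg_right hD' (hdF.isPseudoMetric.nonneg x y))

end TCS
end
end

section
/- Let λ ≥ 2, r ∈ (0,1/6), M a compact metric space with (λ,r)-finite hyperbolic approximation G_k for k > log_{1/r}(diam M). Let ρ ∈ ℝ, i ∈ {−k,…,k−1}, let ẽ = {x,y} be a horizontal edge of the layer L_{i+1}, and define μ : L_i → ℝ by μ(n) = Σ_{v ∈ {x,y}, {v,n} a radial edge of G_k} (ρ/|N(v)|)·(δ_x − δ_y)(v). Then any two points of the support of μ are joined by a horizontal edge of L_i (the support is a complete subgraph of L_i), and if moreover M is (λ,r,C)-homogeneous for some C > 1, then the total variation satisfies Σ_{n∈L_i} |μ(n)| ≤ |ρ|·(2 − 2/C). -/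
open Finset

noncomputable section
open scoped Classical

namespace TCS

/-- `L` is an `ε`-net of `M`: `ε`-separated and `ε`-dense. -/
def IsNet {M : Type*} [MetricSpace M] (ε : ℝ) (L : Set M) : Prop :=
  (∀ x ∈ L, ∀ y ∈ L, x ≠ y → ε ≤ dist x y) ∧ ∀ x : M, ∃ y ∈ L, dist x y ≤ ε

/-- `M` is doubling with constant `D`: every ball of radius `R` is covered by at
most `D` balls of radius `R/2`. -/
def IsDoublingWith (M : Type*) [MetricSpace M] (D : ℝ) : Prop :=
  ∀ (x : M) (R : ℝ), 0 < R → ∃ t : Finset M,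
    (t.card : ℝ) ≤ D ∧
      Metric.closedBall x R ⊆ ⋃ y ∈ t, Metric.closedBall y (R / 2)

/-- `M` is `(λ, r, C)`-homogeneous. -/
def IsHomog (M : Type*) [MetricSpace M] (lam r C : ℝ) : Prop :=
  ∀ ε : ℝ, 0 < ε → ∀ Lnet : Set M, IsNet ε Lnet → ∀ x : M,
    (Lnet ∩ Metric.closedBall x (lam * ε)).Finite ∧
    ((Lnet ∩ Metric.closedBall x (lam * ε)).ncard : ℝ) ≤
      C * ((Lnet ∩ Metric.closedBall x (lam * ε * (1 - 3 * r))).ncard : ℝ)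

/-- The vertex set of the hyperbolic approximation `G_k`: the disjoint union of
the layers `L_{-k}, …, L_k`. -/
def HypV (M : Type*) [MetricSpace M] (L : ℤ → Set M) (k : ℕ) : Type _ :=
  {p : ℤ × M // p.1 ∈ Finset.Icc (-(k : ℤ)) (k : ℤ) ∧ p.2 ∈ L p.1}

/-- The hyperbolic approximation graph `G_k`, with horizontal and radial edges. -/
def hypGraph (lam r : ℝ) (M : Type*) [MetricSpace M] (L : ℤ → Set M) (k : ℕ) :
    SimpleGraph (HypV M L k) :=
  SimpleGraph.fromRel (fun u v =>
    (u.1.1 = v.1.1 ∧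
      ∃ z : M, dist z u.1.2 ≤ lam * r ^ u.1.1 ∧ dist z v.1.2 ≤ lam * r ^ u.1.1) ∨
    (v.1.1 = u.1.1 + 1 ∧
      Metric.closedBall v.1.2 (lam * r ^ v.1.1) ⊆ Metric.closedBall u.1.2 (lam * r ^ u.1.1)))

/-- The set `N(v)` of radial neighbours in the layer `L_i` of a point `v` of the
layer `L_{i+1}`. -/
def radialNbrs (lam r : ℝ) {M : Type*} [MetricSpace M] (L : ℤ → Set M) (i : ℤ)
    (v : M) : Set M :=
  {n | n ∈ L i ∧ Metric.closedBall v (lam * r ^ (i + 1)) ⊆ Metric.closedBall n (lam * r ^ i)}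

/-- The measure `μ` on the layer `L_i` obtained by splitting the molecule
`ρ (δ_x - δ_y)` of the horizontal edge `{x,y} ⊆ L_{i+1}` radially down. -/
def hypMu (lam r : ℝ) {M : Type*} [MetricSpace M] (L : ℤ → Set M) (i : ℤ)
    (ρ : ℝ) (x y : M) : M → ℝ := fun n =>
  (if n ∈ radialNbrs lam r L i x then ρ / ((radialNbrs lam r L i x).ncard : ℝ) else 0)
    - (if n ∈ radialNbrs lam r L i y then ρ / ((radialNbrs lam r L i y).ncard : ℝ) else 0)

end TCS


namespace TCS

/-- A point of the lower net close enough to `v` is a radial neighbour of `v`. -/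
lemma mem_radialNbrs_of_dist {lam r : ℝ} {M : Type*} [MetricSpace M] {L : ℤ → Set M}
    {i : ℤ} {v n : M} (hlam : 0 ≤ lam) (hr0 : 0 < r)
    (hn : n ∈ L i) (h : dist n v ≤ lam * r ^ i * (1 - r)) :
    n ∈ radialNbrs lam r L i v := by
  refine ⟨hn, fun z hz => ?_⟩
  rw [Metric.mem_closedBall] at hz ⊢
  have hp : r ^ (i + 1) = r ^ i * r := zpow_add_one₀ (ne_of_gt hr0) i
  have h3 : dist z n ≤ dist z v + dist n v := by
    rw [dist_comm n v]; exact dist_triangle z v n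
  rw [hp] at hz
  nlinarith [h3]

/-- A radial neighbour of `v` is at distance at most `λ rⁱ` from `v`. -/
lemma dist_radialNbrs {lam r : ℝ} {M : Type*} [MetricSpace M] {L : ℤ → Set M}
    {i : ℤ} {v n : M} (hlam : 0 ≤ lam) (hr0 : 0 < r)
    (h : n ∈ radialNbrs lam r L i v) : dist v n ≤ lam * r ^ i := by
  have hv : v ∈ Metric.closedBall v (lam * r ^ (i + 1)) := by
    simp only [Metric.mem_closedBall, dist_self]
    positivity
  exact Metric.mem_closedBall.1 (h.2 hv)

/-- Key combinatorial estimate for the total variation of the split molecule. -/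
lemma sum_abs_split_le {M : Type*} (Nx Ny : Set M) (hfNx : Nx.Finite) (hfNy : Ny.Finite)
    (ρ C : ℝ) (hC : 1 < C)
    (hT1 : 1 ≤ ((Nx ∩ Ny).ncard : ℝ))
    (hPC : (Nx.ncard : ℝ) ≤ C * ((Nx ∩ Ny).ncard : ℝ))
    (hQC : (Ny.ncard : ℝ) ≤ C * ((Nx ∩ Ny).ncard : ℝ)) :
    (∑' n : M, |(if n ∈ Nx then ρ / (Nx.ncard : ℝ) else 0)
      - (if n ∈ Ny then ρ / (Ny.ncard : ℝ) else 0)|) ≤ |ρ| * (2 - 2 / C) := by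
  classical
  set A := hfNx.toFinset with hAdef
  set B := hfNy.toFinset with hBdef
  have hmemA : ∀ n, n ∈ A ↔ n ∈ Nx := fun n => Set.Finite.mem_toFinset _
  have hmemB : ∀ n, n ∈ B ↔ n ∈ Ny := fun n => Set.Finite.mem_toFinset _
  have hPA : (Nx.ncard : ℝ) = (A.card : ℝ) := by
    rw [← Set.ncard_coe_finset A, hfNx.coe_toFinset]
  have hQB : (Ny.ncard : ℝ) = (B.card : ℝ) := by
    rw [← Set.ncard_coe_finset B, hfNy.coe_toFinset]
  have hTAB : ((Nx ∩ Ny).ncard : ℝ) = ((A ∩ B).card : ℝ) := by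
    rw [← Set.ncard_coe_finset (A ∩ B)]
    congr 2
    rw [Finset.coe_inter, hfNx.coe_toFinset, hfNy.coe_toFinset]
  set P : ℝ := (Nx.ncard : ℝ) with hPdef
  set Q : ℝ := (Ny.ncard : ℝ) with hQdef
  set T : ℝ := ((Nx ∩ Ny).ncard : ℝ) with hTdef
  have hfI : (Nx ∩ Ny).Finite := hfNx.inter_of_left Ny
  have hTP : T ≤ P := by
    rw [hTdef, hPdef]
    exact_mod_cast Set.ncard_le_ncard Set.inter_subset_left hfNx
  have hTQ : T ≤ Q := by
    rw [hTdef, hQdef]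
    exact_mod_cast Set.ncard_le_ncard Set.inter_subset_right hfNy
  have hP1 : 1 ≤ P := le_trans hT1 hTP
  have hQ1 : 1 ≤ Q := le_trans hT1 hTQ
  have hP0 : 0 < P := lt_of_lt_of_le one_pos hP1
  have hQ0 : 0 < Q := lt_of_lt_of_le one_pos hQ1
  have hC0 : (0:ℝ) < C := lt_trans one_pos hC
  -- reduce the tsum to a finite sum
  have hts : (∑' n : M, |(if n ∈ Nx then ρ / P else 0) - (if n ∈ Ny then ρ / Q else 0)|)
      = ∑ n ∈ A ∪ B, |(if n ∈ Nx then ρ / P else 0) - (if n ∈ Ny then ρ / Q else 0)| := by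
    apply tsum_eq_sum
    intro n hn
    rw [Finset.mem_union, hmemA, hmemB] at hn
    push_neg at hn
    simp [hn.1, hn.2]
  rw [hts]
  -- split the finite sum
  have hsumB : ∑ n ∈ B, |(if n ∈ Nx then ρ / P else 0) - (if n ∈ Ny then ρ / Q else 0)|
      = ∑ n ∈ B ∩ A, |ρ / P - ρ / Q| + ∑ n ∈ B \ A, |ρ / Q| := by
    rw [← Finset.sum_inter_add_sum_sdiff B A]
    congr 1
    · apply Finset.sum_congr rfl
      intro n hn
      rw [Finset.mem_inter, hmemB, hmemA] at hn
      simp [hn.1, hn.2]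
    · apply Finset.sum_congr rfl
      intro n hn
      rw [Finset.mem_sdiff, hmemB, hmemA] at hn
      simp [hn.1, hn.2, abs_sub_comm]
  have hsumAB : ∑ n ∈ A ∪ B, |(if n ∈ Nx then ρ / P else 0) - (if n ∈ Ny then ρ / Q else 0)|
      = ∑ n ∈ A \ B, |ρ / P| + (∑ n ∈ B ∩ A, |ρ / P - ρ / Q| + ∑ n ∈ B \ A, |ρ / Q|) := by
    rw [← Finset.sdiff_union_self_eq_union, Finset.sum_union Finset.sdiff_disjoint, hsumB]
    congr 1
    apply Finset.sum_congr rfl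
    intro n hn
    rw [Finset.mem_sdiff, hmemA, hmemB] at hn
    simp [hn.1, hn.2]
  rw [hsumAB, Finset.sum_const, Finset.sum_const, Finset.sum_const, nsmul_eq_mul,
    nsmul_eq_mul, nsmul_eq_mul]
  -- card identities
  have hBA : B ∩ A = A ∩ B := Finset.inter_comm B A
  have hcard1 : ((A \ B).card : ℝ) = P - T := by
    rw [hPA, hTAB]
    have h : ((A \ B).card : ℝ) + ((A ∩ B).card : ℝ) = (A.card : ℝ) := by
      exact_mod_cast Finset.card_sdiff_add_card_inter A B
    linarith
  have hcard2 : ((B \ A).card : ℝ) = Q - T := by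
    rw [hQB, hTAB]
    have h : ((B \ A).card : ℝ) + ((A ∩ B).card : ℝ) = (B.card : ℝ) := by
      rw [← hBA]
      exact_mod_cast Finset.card_sdiff_add_card_inter B A
    linarith
  have hcard3 : ((B ∩ A).card : ℝ) = T := by rw [hBA]; exact hTAB.symm
  rw [hcard1, hcard2, hcard3]
  -- resolve absolute values
  have habsP : |ρ / P| = |ρ| / P := by rw [abs_div, abs_of_pos hP0]
  have habsQ : |ρ / Q| = |ρ| / Q := by rw [abs_div, abs_of_pos hQ0]
  have habsPQ : |ρ / P - ρ / Q| = |ρ| * |1 / P - 1 / Q| := by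
    rw [show ρ / P - ρ / Q = ρ * (1 / P - 1 / Q) by ring, abs_mul]
  rw [habsP, habsQ, habsPQ]
  clear_value P Q T
  clear hts hsumB hsumAB hcard1 hcard2 hcard3 hBA hTAB hPA hQB hmemA hmemB
  clear habsP habsQ habsPQ hPdef hQdef hTdef hAdef hBdef
  clear A B hfI hfNx hfNy
  clear Nx Ny
  rcases le_total P Q with hPQ | hPQ
  · have hs : (0:ℝ) ≤ 1 / P - 1 / Q := by
      rw [sub_nonneg]
      exact one_div_le_one_div_of_le hP0 hPQ
    rw [abs_of_nonneg hs]
    have key : (P - T) * (|ρ| / P) + (T * (|ρ| * (1 / P - 1 / Q)) + (Q - T) * (|ρ| / Q))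
        = |ρ| * (2 - 2 * T / Q) := by
      field_simp
      ring
    rw [key]
    apply mul_le_mul_of_nonneg_left _ (abs_nonneg ρ)
    have : 2 / C ≤ 2 * T / Q := by
      rw [div_le_div_iff₀ hC0 hQ0]
      nlinarith
    linarith
  · have hs : 1 / P - 1 / Q ≤ 0 := by
      rw [sub_nonpos]
      exact one_div_le_one_div_of_le hQ0 hPQ
    rw [abs_of_nonpos hs]
    have key : (P - T) * (|ρ| / P) + (T * (|ρ| * -(1 / P - 1 / Q)) + (Q - T) * (|ρ| / Q))
        = |ρ| * (2 - 2 * T / P) := by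
      field_simp
      ring
    rw [key]
    apply mul_le_mul_of_nonneg_left _ (abs_nonneg ρ)
    have : 2 / C ≤ 2 * T / P := by
      rw [div_le_div_iff₀ hC0 hP0]
      nlinarith
    linarith

theorem statement19 (lam r : ℝ) (hlam : 2 ≤ lam) (hr0 : 0 < r) (hr : r < 1 / 6)
    (M : Type*) [MetricSpace M] [CompactSpace M]
    (L : ℤ → Set M) (hL : ∀ i : ℤ, IsNet (r ^ i) (L i))
    (k : ℕ) (hk : Real.logb (1 / r) (Metric.diam (Set.univ : Set M)) < k)
    (i : ℤ) (hik : -(k : ℤ) ≤ i ∧ i ≤ (k : ℤ) - 1)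
    (ρ : ℝ) (x y : M) (hx : x ∈ L (i + 1)) (hy : y ∈ L (i + 1)) (hxy : x ≠ y)
    (hedge : ∃ z : M, dist z x ≤ lam * r ^ (i + 1) ∧ dist z y ≤ lam * r ^ (i + 1)) :
    (∀ n m : M, hypMu lam r L i ρ x y n ≠ 0 → hypMu lam r L i ρ x y m ≠ 0 → n ≠ m →
      n ∈ L i ∧ m ∈ L i ∧
        ∃ z : M, dist z n ≤ lam * r ^ i ∧ dist z m ≤ lam * r ^ i) ∧
    (∀ C : ℝ, 1 < C → IsHomog M lam r C →
      (∑' n : M, |hypMu lam r L i ρ x y n|) ≤ |ρ| * (2 - 2 / C)) := by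
  obtain ⟨z0, hz0x, hz0y⟩ := hedge
  have hlam0 : (0:ℝ) ≤ lam := by linarith
  have hri : (0:ℝ) < r ^ i := by positivity
  have hp : r ^ (i + 1) = r ^ i * r := zpow_add_one₀ (ne_of_gt hr0) i
  constructor
  · -- support is a complete subgraph
    intro n m hn hm hnm
    have key : ∀ w : M, hypMu lam r L i ρ x y w ≠ 0 → w ∈ L i ∧ dist z0 w ≤ lam * r ^ i := by
      intro w hw
      by_cases hwx : w ∈ radialNbrs lam r L i x
      · exact ⟨hwx.1, Metric.mem_closedBall.1 (hwx.2 (Metric.mem_closedBall.2 hz0x))⟩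
      · by_cases hwy : w ∈ radialNbrs lam r L i y
        · exact ⟨hwy.1, Metric.mem_closedBall.1 (hwy.2 (Metric.mem_closedBall.2 hz0y))⟩
        · exact absurd (by simp [hypMu, hwx, hwy]) hw
    obtain ⟨h1, h2⟩ := key n hn
    obtain ⟨h3, h4⟩ := key m hm
    exact ⟨h1, h3, z0, h2, h4⟩
  · -- total variation bound
    intro C hC hhom
    obtain ⟨hfx, hcx⟩ := hhom (r ^ i) hri (L i) (hL i) x
    obtain ⟨hfy, hcy⟩ := hhom (r ^ i) hri (L i) (hL i) y
    set Nx := radialNbrs lam r L i x with hNxdef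
    set Ny := radialNbrs lam r L i y with hNydef
    have hNxsub : Nx ⊆ L i ∩ Metric.closedBall x (lam * r ^ i) := fun n hn =>
      ⟨hn.1, Metric.mem_closedBall.2 (by rw [dist_comm]; exact dist_radialNbrs hlam0 hr0 hn)⟩
    have hNysub : Ny ⊆ L i ∩ Metric.closedBall y (lam * r ^ i) := fun n hn =>
      ⟨hn.1, Metric.mem_closedBall.2 (by rw [dist_comm]; exact dist_radialNbrs hlam0 hr0 hn)⟩
    have hfNx : Nx.Finite := hfx.subset hNxsub
    have hfNy : Ny.Finite := hfy.subset hNysub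
    have hfI : (Nx ∩ Ny).Finite := hfNx.inter_of_left Ny
    have hdxy : dist x y ≤ 2 * (lam * (r ^ i * r)) := by
      have h := dist_triangle x z0 y
      rw [dist_comm x z0] at h
      rw [hp] at hz0x hz0y
      linarith
    -- inner ball around x is contained in both neighbour sets
    have hIxsub : L i ∩ Metric.closedBall x (lam * r ^ i * (1 - 3 * r)) ⊆ Nx ∩ Ny := by
      rintro n ⟨hnL, hnB⟩
      rw [Metric.mem_closedBall] at hnB
      constructor
      · exact mem_radialNbrs_of_dist hlam0 hr0 hnL
          (by nlinarith [mul_nonneg (mul_nonneg hlam0 hri.le) hr0.le])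
      · refine mem_radialNbrs_of_dist hlam0 hr0 hnL ?_
        have h := dist_triangle n x y
        nlinarith
    have hIysub : L i ∩ Metric.closedBall y (lam * r ^ i * (1 - 3 * r)) ⊆ Nx ∩ Ny := by
      rintro n ⟨hnL, hnB⟩
      rw [Metric.mem_closedBall] at hnB
      have hdyx : dist y x ≤ 2 * (lam * (r ^ i * r)) := by rw [dist_comm]; exact hdxy
      constructor
      · refine mem_radialNbrs_of_dist hlam0 hr0 hnL ?_
        have h := dist_triangle n y x
        nlinarith
      · exact mem_radialNbrs_of_dist hlam0 hr0 hnL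
          (by nlinarith [mul_nonneg (mul_nonneg hlam0 hri.le) hr0.le])
    -- the inner ball around x is nonempty
    have hIx_ne : (L i ∩ Metric.closedBall x (lam * r ^ i * (1 - 3 * r))).Nonempty := by
      obtain ⟨n, hnL, hnd⟩ := (hL i).2 x
      refine ⟨n, hnL, Metric.mem_closedBall.2 ?_⟩
      rw [dist_comm]
      nlinarith [mul_le_mul_of_nonneg_right
        (show (1:ℝ) ≤ lam * (1 - 3 * r) by nlinarith) hri.le, hnd]
    have hT1 : 1 ≤ ((Nx ∩ Ny).ncard : ℝ) := by
      have h0 : 0 < (Nx ∩ Ny).ncard := (Set.ncard_pos hfI).2 (hIx_ne.mono hIxsub)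
      exact_mod_cast h0
    have hC0 : (0:ℝ) < C := lt_trans one_pos hC
    have hPC : (Nx.ncard : ℝ) ≤ C * ((Nx ∩ Ny).ncard : ℝ) := by
      have h1 : Nx.ncard ≤ (L i ∩ Metric.closedBall x (lam * r ^ i)).ncard :=
        Set.ncard_le_ncard hNxsub hfx
      have h2 : (L i ∩ Metric.closedBall x (lam * r ^ i * (1 - 3 * r))).ncard
          ≤ (Nx ∩ Ny).ncard := Set.ncard_le_ncard hIxsub hfI
      calc (Nx.ncard : ℝ) ≤ ((L i ∩ Metric.closedBall x (lam * r ^ i)).ncard : ℝ) := by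
            exact_mod_cast h1
        _ ≤ C * ((L i ∩ Metric.closedBall x (lam * r ^ i * (1 - 3 * r))).ncard : ℝ) := hcx
        _ ≤ C * ((Nx ∩ Ny).ncard : ℝ) :=
            mul_le_mul_of_nonneg_left (by exact_mod_cast h2) (le_of_lt hC0)
    have hQC : (Ny.ncard : ℝ) ≤ C * ((Nx ∩ Ny).ncard : ℝ) := by
      have h1 : Ny.ncard ≤ (L i ∩ Metric.closedBall y (lam * r ^ i)).ncard :=
        Set.ncard_le_ncard hNysub hfy
      have h2 : (L i ∩ Metric.closedBall y (lam * r ^ i * (1 - 3 * r))).ncard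
          ≤ (Nx ∩ Ny).ncard := Set.ncard_le_ncard hIysub hfI
      calc (Ny.ncard : ℝ) ≤ ((L i ∩ Metric.closedBall y (lam * r ^ i)).ncard : ℝ) := by
            exact_mod_cast h1
        _ ≤ C * ((L i ∩ Metric.closedBall y (lam * r ^ i * (1 - 3 * r))).ncard : ℝ) := hcy
        _ ≤ C * ((Nx ∩ Ny).ncard : ℝ) :=
            mul_le_mul_of_nonneg_left (by exact_mod_cast h2) (le_of_lt hC0)
    have := sum_abs_split_le Nx Ny hfNx hfNy ρ C hC hT1 hPC hQC
    simpa [hypMu, hNxdef, hNydef] using this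

end TCS
end
end
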